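/- Let D be a double chain with chains U and L, and let P₁ and P₂ be polygonizations of D. If P₁ and P₂ have the same set of edges with both endpoints in U and the same set of edges with both endpoints in L, then P₁ = P₂ (a polygonization of a double chain is uniquely determined by its non-alternating edges). -/

import Mathlib

open scoped Real

noncomputable section

/-- Two closed straight-line segments (edges) `[a,b]` and `[c,d]` cross if they share
a point that is not a common endpoint of the two edges. -/
def EdgesCross (a b c d : ℝ × ℝ) : Prop :=
  ∃ x : ℝ × ℝ, x ∈ segment ℝ a b ∧ x ∈ segment ℝ c d ∧
    ¬((x = a ∨ x = b) ∧ (x = c ∨ x = d))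

/-- A geometric graph (a simple graph drawn with straight segments on the point set `S`)
is non-crossing if no two distinct edges cross. -/
def NonCrossing {S : Finset (ℝ × ℝ)} (G : SimpleGraph ↥S) : Prop :=
  ∀ a b c d : ↥S, G.Adj a b → G.Adj c d → s(a, b) ≠ s(c, d) →
    ¬ EdgesCross a.1 b.1 c.1 d.1

/-- The degree of the point `p` in the geometric graph `G` on `S` (it is `0` if `p ∉ S`). -/
def degAt {S : Finset (ℝ × ℝ)} (G : SimpleGraph ↥S) (p : ℝ × ℝ) : ℕ :=
  Set.ncard {q : ↥S | ∃ hp : p ∈ S, G.Adj ⟨p, hp⟩ q}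

/-- A non-crossing path partition (ncp partition) of `S`: a non-crossing geometric graph on `S`
each of whose connected components is a path (equivalently, it is acyclic and every vertex has
degree at most 2); isolated vertices (singletons, paths of length 0) are allowed. -/
def IsNcp {S : Finset (ℝ × ℝ)} (G : SimpleGraph ↥S) : Prop :=
  NonCrossing G ∧ G.IsAcyclic ∧ ∀ v : ↥S, degAt G v.1 ≤ 2

/-- A non-crossing path partition without singletons (ncpws partition):
an ncp partition where every vertex has degree at least 1. -/
def IsNcpws {S : Finset (ℝ × ℝ)} (G : SimpleGraph ↥S) : Prop :=
  IsNcp G ∧ ∀ v : ↥S, 1 ≤ degAt G v.1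

/-- Number of ncp partitions of `S`. -/
def ncpCount (S : Finset (ℝ × ℝ)) : ℕ := Nat.card {G : SimpleGraph ↥S // IsNcp G}

/-- Number of ncpws partitions of `S`. -/
def ncpwsCount (S : Finset (ℝ × ℝ)) : ℕ := Nat.card {G : SimpleGraph ↥S // IsNcpws G}

/-- `S` is in convex position: no point of `S` lies in the convex hull of the others. -/
def ConvexPosition (S : Finset (ℝ × ℝ)) : Prop :=
  ∀ p ∈ S, p ∉ convexHull ℝ ((S : Set (ℝ × ℝ)) \ {p})

/-- The vertex `p_{k+1}` of the regular `n`-gon (labeled clockwise). -/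
def pPt (n k : ℕ) : ℝ × ℝ :=
  (Real.cos (2 * π * k / n), - Real.sin (2 * π * k / n))

/-- The vertex set of the regular `n`-gon. -/
def Pgon (n : ℕ) : Finset (ℝ × ℝ) := (Finset.range n).image (pPt n)

/-- `g n`: number of ncp partitions of the vertex set of the regular `n`-gon (`g 0 = 1`). -/
def gCount (n : ℕ) : ℕ := ncpCount (Pgon n)

/-- `f n`: number of ncp partitions of the regular `n`-gon where the fixed vertex `p₁`
has degree exactly 1 (`f 0 = 0`). -/
def fCount (n : ℕ) : ℕ :=
  Nat.card {G : SimpleGraph ↥(Pgon n) // IsNcp G ∧ degAt G (pPt n 0) = 1}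

/-- `h n`: number of ncp partitions of the regular `n`-gon where the fixed vertex `p₁`
has degree exactly 2 (`h 0 = 0`). -/
def hCount (n : ℕ) : ℕ :=
  Nat.card {G : SimpleGraph ↥(Pgon n) // IsNcp G ∧ degAt G (pPt n 0) = 2}

/-- `gs n`: number of ncpws partitions of the regular `n`-gon (`gs 0 = 1`). -/
def gsCount (n : ℕ) : ℕ := ncpwsCount (Pgon n)

/-- `fs n`: number of ncpws partitions of the regular `n`-gon where `p₁` has degree 1. -/
def fsCount (n : ℕ) : ℕ :=
  Nat.card {G : SimpleGraph ↥(Pgon n) // IsNcpws G ∧ degAt G (pPt n 0) = 1}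

/-- `hs n`: number of ncpws partitions of the regular `n`-gon where `p₁` has degree 2. -/
def hsCount (n : ℕ) : ℕ :=
  Nat.card {G : SimpleGraph ↥(Pgon n) // IsNcpws G ∧ degAt G (pPt n 0) = 2}

/-- The ordering condition for an ncp partition w.r.t. the clockwise labeling `σ`:
whenever `σ i` and `σ k` (`i < k`) are the two degree-1 endpoints of a path component of
positive length, no vertex `σ j` with `i < j < k` is an endpoint (i.e. has degree ≤ 1). -/
def OrderedCond {n : ℕ} {S : Finset (ℝ × ℝ)} (σ : Fin n → ℝ × ℝ)
    (G : SimpleGraph ↥S) : Prop :=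
  ∀ i j k : Fin n, i < j → j < k →
    ∀ (hi : σ i ∈ S) (hk : σ k ∈ S),
      degAt G (σ i) = 1 → degAt G (σ k) = 1 →
      G.Reachable ⟨σ i, hi⟩ ⟨σ k, hk⟩ → ¬ degAt G (σ j) ≤ 1

/-- `go n`: number of ordered ncp partitions of the regular `n`-gon (`go 0 = 1`). -/
def goCount (n : ℕ) : ℕ :=
  Nat.card {G : SimpleGraph ↥(Pgon n) //
    IsNcp G ∧ OrderedCond (fun i : Fin n => pPt n i) G}

/-- `fo n`: number of ordered ncp partitions of the regular `n`-gon where `p₁` has degree 1. -/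
def foCount (n : ℕ) : ℕ :=
  Nat.card {G : SimpleGraph ↥(Pgon n) //
    IsNcp G ∧ OrderedCond (fun i : Fin n => pPt n i) G ∧ degAt G (pPt n 0) = 1}

/-- `ho n`: number of ordered ncp partitions of the regular `n`-gon where `p₁` has degree 2. -/
def hoCount (n : ℕ) : ℕ :=
  Nat.card {G : SimpleGraph ↥(Pgon n) //
    IsNcp G ∧ OrderedCond (fun i : Fin n => pPt n i) G ∧ degAt G (pPt n 0) = 2}

/-- The orientation determinant of the triple `(p, q, r)`. -/
def orientDet (p q r : ℝ × ℝ) : ℝ :=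
  (q.1 - p.1) * (r.2 - p.2) - (q.2 - p.2) * (r.1 - p.1)

/-- `σ` lists the points of `S` as `p₁, …, pₙ` in clockwise order around their convex hull. -/
def IsClockwiseLabeling {n : ℕ} (S : Finset (ℝ × ℝ)) (σ : Fin n → ℝ × ℝ) : Prop :=
  Function.Injective σ ∧ Set.range σ = (S : Set (ℝ × ℝ)) ∧
    ∀ i j k : Fin n, i < j → j < k → orientDet (σ i) (σ j) (σ k) < 0

/-- `p` lies strictly below the line through `q` and `r` (intended for `q.1 < r.1`):
`det [[r₁−q₁, r₂−q₂], [p₁−q₁, p₂−q₂]] < 0`. -/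
def StrictlyBelow (p q r : ℝ × ℝ) : Prop :=
  (r.1 - q.1) * (p.2 - q.2) - (r.2 - q.2) * (p.1 - q.1) < 0

/-- `p` lies strictly above the line through `q` and `r` (intended for `q.1 < r.1`). -/
def StrictlyAbove (p q r : ℝ × ℝ) : Prop :=
  0 < (r.1 - q.1) * (p.2 - q.2) - (r.2 - q.2) * (p.1 - q.1)

/-- A double chain with chains `U` and `L` (the point set is `U ∪ L`). -/
structure IsDoubleChain (U L : Finset (ℝ × ℝ)) : Prop where
  disj : Disjoint U L
  distinct_x : ∀ p ∈ U ∪ L, ∀ q ∈ U ∪ L, p ≠ q → p.1 ≠ q.1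
  concaveU : ∀ a ∈ U, ∀ b ∈ U, ∀ c ∈ U, a.1 < b.1 → b.1 < c.1 → StrictlyBelow b a c
  convexL : ∀ a ∈ L, ∀ b ∈ L, ∀ c ∈ L, a.1 < b.1 → b.1 < c.1 → StrictlyAbove b a c
  chainL_below : ∀ q ∈ U, ∀ r ∈ U, q.1 < r.1 → ∀ p ∈ L, StrictlyBelow p q r
  chainU_above : ∀ q ∈ L, ∀ r ∈ L, q.1 < r.1 → ∀ p ∈ U, StrictlyAbove p q r

/-- A polygonization of `D`: a non-crossing geometric graph on `D` that is a
Hamiltonian cycle (connected and every vertex has degree 2). -/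
def IsPolygonization {D : Finset (ℝ × ℝ)} (G : SimpleGraph ↥D) : Prop :=
  NonCrossing G ∧ G.Connected ∧ ∀ v : ↥D, degAt G v.1 = 2

/-- Number of polygonizations of `D`. -/
def polyCount (D : Finset (ℝ × ℝ)) : ℕ := Nat.card {G : SimpleGraph ↥D // IsPolygonization G}

/-- The number of alternating edges (edges with one endpoint in `U` and the other in `L`)
of a geometric graph on the double chain `U ∪ L`. -/
def altEdgeCount (U L : Finset (ℝ × ℝ)) (G : SimpleGraph ↥(U ∪ L)) : ℕ :=
  Set.ncard {e ∈ G.edgeSet | ∃ a b : ↥(U ∪ L), e = s(a, b) ∧ a.1 ∈ U ∧ b.1 ∈ L}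

/-- The geometric graph on `S` formed by the edges of `G` with both endpoints in `S ⊆ T`. -/
def restrictGraph {S T : Finset (ℝ × ℝ)} (h : S ⊆ T) (G : SimpleGraph ↥T) :
    SimpleGraph ↥S :=
  SimpleGraph.comap (fun x : ↥S => (⟨x.1, h x.2⟩ : ↥T)) G

end

/-!
Give the points of `U ∪ L` their x-order. Two alternating edges `u l'` and `u' l` with
`u < u'` in `U` and `l < l'` in `L` always cross, since each line separates the endpoints of the
other segment. Suppose `P₁ ≠ P₂`; as they share the non-alternating edges, they differ in an
alternating pair, and we take the lexicographically least such pair `(u, l)`, say an edge of `P₁`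
only. All degrees are `2`, so `u` has as many `L`-neighbours in `P₁` as in `P₂`: there is an
alternating edge `u l'` of `P₂` only, and minimality forces `l < l'`. Likewise `l` has a
`U`-neighbour `u'` in `P₂` only, with `u < u'`. Then `u l'` and `u' l` are crossing edges of `P₂`.
-/

lemma orientDet_one_sub_smul_add_smul (p q c d : ℝ × ℝ) (t : ℝ) :
    orientDet p q ((1 - t) • c + t • d) = (1 - t) * orientDet p q c + t * orientDet p q d := by
  simp only [orientDet, Prod.fst_add, Prod.snd_add, Prod.smul_fst, Prod.smul_snd, smul_eq_mul]
  ring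

lemma div_sub_mem_Ioo {x y : ℝ} (h : x * y < 0) : x / (x - y) ∈ Set.Ioo 0 1 := by
  rcases mul_neg_iff.mp h with ⟨hx, hy⟩ | ⟨hx, hy⟩
  · exact ⟨div_pos hx (by linarith), (div_lt_one (by linarith)).2 (by linarith)⟩
  · exact ⟨div_pos_of_neg_of_neg hx (by linarith),
      (div_lt_one_of_neg (by linarith)).2 (by linarith)⟩

lemma sub_ne_zero_of_mul_neg {x y : ℝ} (h : x * y < 0) : x - y ≠ 0 := by
  rw [sub_ne_zero]
  rintro rfl
  exact (mul_self_nonneg x).not_gt h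

theorem edgesCross_of_orientDet_mul_neg {a b c d : ℝ × ℝ}
    (hcd : orientDet a b c * orientDet a b d < 0) (hab : orientDet c d a * orientDet c d b < 0) :
    EdgesCross a b c d := by
  set t := orientDet a b c / (orientDet a b c - orientDet a b d) with ht
  set s := orientDet c d a / (orientDet c d a - orientDet c d b) with hs
  obtain ⟨ht₀, ht₁⟩ := div_sub_mem_Ioo hcd
  obtain ⟨hs₀, hs₁⟩ := div_sub_mem_Ioo hab
  -- the intersection point of the lines `ab` and `cd`, written on either line
  have hx : (1 - s) • a + s • b = (1 - t) • c + t • d := by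
    have := sub_ne_zero_of_mul_neg hcd
    have := sub_ne_zero_of_mul_neg hab
    ext <;> simp only [ht, hs, Prod.fst_add, Prod.snd_add, Prod.smul_fst, Prod.smul_snd,
      smul_eq_mul] <;> field_simp <;> simp only [orientDet] <;> ring
  have hx_on_cd : orientDet c d ((1 - s) • a + s • b) = 0 := by
    rw [hx, orientDet_one_sub_smul_add_smul]
    simp only [orientDet]; ring
  refine ⟨(1 - s) • a + s • b, ⟨1 - s, s, by linarith, hs₀.le, by ring, rfl⟩,
    ⟨1 - t, t, by linarith, ht₀.le, by ring, hx.symm⟩, ?_⟩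
  rintro ⟨h | h, -⟩ <;> rw [h] at hx_on_cd <;> simp [hx_on_cd] at hab

namespace SimpleGraph

variable {V : Type*} {G₁ G₂ : SimpleGraph V}

lemma exists_adj_not_adj_of_ncard_neighborSet_eq [Finite V] {s : Set V} {v w : V}
    (hs : ∀ x ∈ s, G₂.Adj v x → G₁.Adj v x)
    (hdeg : (G₁.neighborSet v).ncard = (G₂.neighborSet v).ncard)
    (h₁ : G₁.Adj v w) (h₂ : ¬ G₂.Adj v w) : ∃ x ∉ s, G₂.Adj v x ∧ ¬ G₁.Adj v x := by
  by_contra! h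
  have hsub : G₂.neighborSet v ⊂ G₁.neighborSet v := by
    refine (Set.ssubset_iff_of_subset fun x hx => ?_).mpr ⟨w, h₁, h₂⟩
    by_cases hxs : x ∈ s
    · exact hs x hxs hx
    · exact h x hxs hx
  exact (Set.ncard_lt_ncard hsub).ne' hdeg

def CrossingFreeBetween {α : Type*} [LinearOrder α] (f : V → α) (s : Set V)
    (G : SimpleGraph V) : Prop :=
  ∀ ⦃u u' l l' : V⦄, u ∈ s → u' ∈ s → l ∉ s → l' ∉ s → f u < f u' → f l < f l' →
    G.Adj u l' → ¬ G.Adj u' l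

variable [Finite V] {α : Type*} [LinearOrder α] {f : V → α} {s : Set V}

lemma adj_of_adj_of_forall_toLex_le (hf : Function.Injective f)
    (hin : ∀ u ∈ s, ∀ v ∈ s, G₁.Adj u v ↔ G₂.Adj u v)
    (hout : ∀ u ∉ s, ∀ v ∉ s, G₁.Adj u v ↔ G₂.Adj u v)
    (hdeg : ∀ v, (G₁.neighborSet v).ncard = (G₂.neighborSet v).ncard)
    (h₂ : CrossingFreeBetween f s G₂) {u l : V} (hu : u ∈ s) (hl : l ∉ s)
    (hmin : ∀ u' ∈ s, ∀ l' ∉ s, ¬(G₁.Adj u' l' ↔ G₂.Adj u' l') →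
      toLex (f u, f l) ≤ toLex (f u', f l'))
    (h₁ : G₁.Adj u l) : G₂.Adj u l := by
  by_contra h₂ul
  obtain ⟨l', hl', h₂ul', h₁ul'⟩ := exists_adj_not_adj_of_ncard_neighborSet_eq (s := s)
    (fun x hx => (hin u hu x hx).mpr) (hdeg u) h₁ h₂ul
  obtain ⟨u', hu', h₂lu', h₁lu'⟩ := exists_adj_not_adj_of_ncard_neighborSet_eq (s := sᶜ)
    (fun x hx => (hout l hl x hx).mpr) (hdeg l) h₁.symm (fun h => h₂ul h.symm)
  rw [Set.notMem_compl_iff] at hu'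
  have hll' : f l < f l' := by
    have hle := Prod.Lex.toLex_le_toLex'.mp (hmin u hu l' hl' fun h => h₁ul' (h.mpr h₂ul'))
    exact (hle.2 rfl).lt_of_ne (hf.ne (by rintro rfl; exact h₂ul h₂ul'))
  have huu' : f u < f u' := by
    have hle := Prod.Lex.toLex_le_toLex'.mp
      (hmin u' hu' l hl fun h => h₁lu' (h.mpr h₂lu'.symm).symm)
    exact hle.1.lt_of_ne (hf.ne (by rintro rfl; exact h₂ul h₂lu'.symm))
  exact h₂ hu hu' hl hl' huu' hll' h₂ul' h₂lu'.symm

theorem eq_of_crossingFreeBetween (hf : Function.Injective f)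
    (hin : ∀ u ∈ s, ∀ v ∈ s, G₁.Adj u v ↔ G₂.Adj u v)
    (hout : ∀ u ∉ s, ∀ v ∉ s, G₁.Adj u v ↔ G₂.Adj u v)
    (hdeg : ∀ v, (G₁.neighborSet v).ncard = (G₂.neighborSet v).ncard)
    (h₁ : CrossingFreeBetween f s G₁) (h₂ : CrossingFreeBetween f s G₂) : G₁ = G₂ := by
  suffices hcross : ∀ u ∈ s, ∀ l ∉ s, G₁.Adj u l ↔ G₂.Adj u l by
    ext u v
    by_cases hu : u ∈ s <;> by_cases hv : v ∈ s
    · exact hin u hu v hv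
    · exact hcross u hu v hv
    · rw [G₁.adj_comm, G₂.adj_comm]; exact hcross v hv u hu
    · exact hout u hu v hv
  by_contra hne
  simp only [not_forall] at hne
  let D := {p : V × V | p.1 ∈ s ∧ p.2 ∉ s ∧ ¬(G₁.Adj p.1 p.2 ↔ G₂.Adj p.1 p.2)}
  have hD : D.Nonempty := by
    obtain ⟨u, hu, l, hl, h⟩ := hne
    exact ⟨(u, l), hu, hl, h⟩
  obtain ⟨⟨u, l⟩, ⟨hu, hl, hul⟩, hmin⟩ :=
    D.exists_min_image (fun p => toLex (f p.1, f p.2)) D.toFinite hD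
  have hmin₁₂ : ∀ u' ∈ s, ∀ l' ∉ s, ¬(G₁.Adj u' l' ↔ G₂.Adj u' l') →
      toLex (f u, f l) ≤ toLex (f u', f l') :=
    fun u' hu' l' hl' h => hmin (u', l') ⟨hu', hl', h⟩
  refine hul ⟨adj_of_adj_of_forall_toLex_le hf hin hout hdeg h₂ hu hl hmin₁₂,
    adj_of_adj_of_forall_toLex_le hf (fun u hu v hv => (hin u hu v hv).symm)
      (fun u hu v hv => (hout u hu v hv).symm) (fun v => (hdeg v).symm) h₁ hu hl
      (fun u' hu' l' hl' h => hmin₁₂ u' hu' l' hl' (h ∘ Iff.symm))⟩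

end SimpleGraph

lemma degAt_val_eq_ncard_neighborSet {S : Finset (ℝ × ℝ)} (G : SimpleGraph ↥S) (v : ↥S) :
    degAt G v.1 = (G.neighborSet v).ncard := by
  simp [degAt, SimpleGraph.neighborSet]

lemma adj_iff_of_restrictGraph_eq {S T : Finset (ℝ × ℝ)} (h : S ⊆ T) {G₁ G₂ : SimpleGraph ↥T}
    (hG : restrictGraph h G₁ = restrictGraph h G₂) {v w : ↥T} (hv : v.1 ∈ S) (hw : w.1 ∈ S) :
    G₁.Adj v w ↔ G₂.Adj v w :=
  Iff.of_eq (congrArg (fun G : SimpleGraph ↥S => G.Adj ⟨v.1, hv⟩ ⟨w.1, hw⟩) hG)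

lemma mem_right_of_notMem_left {α : Type*} [DecidableEq α] {U L : Finset α} {v : ↥(U ∪ L)}
    (hv : v.1 ∉ U) : v.1 ∈ L :=
  (Finset.mem_union.mp v.2).resolve_left hv

namespace IsDoubleChain

variable {U L : Finset (ℝ × ℝ)}

lemma injective_fst (hDC : IsDoubleChain U L) : Function.Injective fun v : ↥(U ∪ L) => v.1.1 :=
  fun v w h => Subtype.ext (by_contra fun hne => hDC.distinct_x v.1 v.2 w.1 w.2 hne h)

theorem edgesCross (hDC : IsDoubleChain U L) {u u' l l' : ℝ × ℝ}
    (hu : u ∈ U) (hu' : u' ∈ U) (hl : l ∈ L) (hl' : l' ∈ L)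
    (huu' : u.1 < u'.1) (hll' : l.1 < l'.1) : EdgesCross u l' u' l := by
  have h₁ := hDC.chainL_below u hu u' hu' huu' l hl
  have h₂ := hDC.chainL_below u hu u' hu' huu' l' hl'
  have h₃ := hDC.chainU_above l hl l' hl' hll' u hu
  have h₄ := hDC.chainU_above l hl l' hl' hll' u' hu'
  unfold StrictlyBelow StrictlyAbove at *
  apply edgesCross_of_orientDet_mul_neg
  · exact mul_neg_of_pos_of_neg (by unfold orientDet; linarith) (by unfold orientDet; linarith)
  · exact mul_neg_of_neg_of_pos (by unfold orientDet; linarith) (by unfold orientDet; linarith)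

theorem crossingFreeBetween (hDC : IsDoubleChain U L) {G : SimpleGraph ↥(U ∪ L)}
    (hG : NonCrossing G) :
    G.CrossingFreeBetween (fun v => v.1.1) {v | v.1 ∈ U} := by
  intro u u' l l' hu hu' hl hl' huu' hll' hul' hu'l
  refine hG u l' u' l hul' hu'l ?_ (hDC.edgesCross hu hu' (mem_right_of_notMem_left hl)
    (mem_right_of_notMem_left hl') huu' hll')
  rw [Ne, Sym2.eq_iff]
  rintro (⟨rfl, -⟩ | ⟨rfl, -⟩)
  · exact lt_irrefl _ huu'
  · exact hl hu

end IsDoubleChain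

/-- a polygonization of a double chain is uniquely determined by its
non-alternating edges (the edges with both endpoints in `U` and those with both
endpoints in `L`). -/
theorem double_chain_polygonization_determined_by_nonalternating
    (U L : Finset (ℝ × ℝ)) (hDC : IsDoubleChain U L)
    (P₁ P₂ : SimpleGraph ↥(U ∪ L))
    (h₁ : IsPolygonization P₁) (h₂ : IsPolygonization P₂)
    (hU : restrictGraph (Finset.subset_union_left (s₂ := L)) P₁ =
          restrictGraph Finset.subset_union_left P₂)
    (hL : restrictGraph (Finset.subset_union_right (s₁ := U)) P₁ =
          restrictGraph Finset.subset_union_right P₂) :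
    P₁ = P₂ := by
  obtain ⟨hnc₁, -, hdeg₁⟩ := h₁
  obtain ⟨hnc₂, -, hdeg₂⟩ := h₂
  refine SimpleGraph.eq_of_crossingFreeBetween (s := {v | v.1 ∈ U}) hDC.injective_fst
    (fun u hu v hv => adj_iff_of_restrictGraph_eq _ hU hu hv)
    (fun u hu v hv => adj_iff_of_restrictGraph_eq _ hL (mem_right_of_notMem_left hu)
      (mem_right_of_notMem_left hv))
    (fun v => ?_) (hDC.crossingFreeBetween hnc₁) (hDC.crossingFreeBetween hnc₂)
  rw [← degAt_val_eq_ncard_neighborSet, ← degAt_val_eq_ncard_neighborSet, hdeg₁, hdeg₂]
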